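/- arXiv:2504.06700 — 6 statements merged into one kernel-verified Lean document; each statement's English description precedes it below -/
import Mathlib

section
/- Let x̃ be an optimal solution of LP-(*), i.e., a feasible solution whose objective value Val(x̃) is minimal among all feasible solutions. Then Val(x̃) = Σ_{t=1}^ℓ δ_t ( Σ_{{u,v}∈E^(t)} x̃^(t){u,v} + Σ_{{u,v}∈NE^(t)} (1 − x̃^(t){u,v}) ) ≥ Σ_{t=1}^ℓ δ_t · |NFbdNE^(t)|, where NFbdNE^(t) := {{u,v} ∈ NE^(t) : x̃^(t){u,v} < 1} is the set of non-forbidden non-edge pairs at layer t. -/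
open Finset
open scoped Classical

/-- Feasibility for LP-(*): each layer `t ∈ {1,…,ℓ}` carries a `[0,1]`-valued
function on unordered pairs (vanishing on the diagonal) satisfying the
triangle inequality, and the values are monotone non-increasing bottom-up. -/
def LPStarFeasible {V : Type*} (ℓ : ℕ) (x : ℕ → Sym2 V → ℝ) : Prop :=
  (∀ t ∈ Finset.Icc 1 ℓ, ∀ u : V, x t s(u, u) = 0) ∧
  (∀ t ∈ Finset.Icc 1 ℓ, ∀ u v p : V, x t s(u, v) ≤ x t s(u, p) + x t s(p, v)) ∧
  (∀ t ∈ Finset.Icc 1 ℓ, ∀ e : Sym2 V, 0 ≤ x t e ∧ x t e ≤ 1) ∧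
  (∀ t, 1 ≤ t → t < ℓ → ∀ e : Sym2 V, x (t + 1) e ≤ x t e)

/-- The objective value of LP-(*):
`Σ_t δ_t (Σ_{e ∈ E^(t)} x^(t)_e + Σ_{e ∈ NE^(t)} (1 − x^(t)_e))`,
where `NE^(t)` is the set of non-diagonal pairs not in `E^(t)`. -/
noncomputable def LPStarVal {V : Type*} [Fintype V] [DecidableEq V]
    (ℓ : ℕ) (δ : ℕ → ℝ) (E : ℕ → Finset (Sym2 V)) (x : ℕ → Sym2 V → ℝ) : ℝ :=
  ∑ t ∈ Finset.Icc 1 ℓ, δ t *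
    ((∑ e ∈ E t, x t e) +
      ∑ e ∈ Finset.univ.filter (fun e : Sym2 V => ¬ e.IsDiag) \ E t, (1 - x t e))

/-!
Scaling an optimal solution up by a factor `1 + ε` and capping at `1` keeps it feasible.
For `ε` small enough the cap only bites on pairs already at `1`, so the objective changes by
`ε (Σ_t δ_t Σ_{E^(t)} x̃ − Σ_t δ_t Σ_{NFbdNE^(t)} x̃)` at most, and optimality makes this
nonnegative. Hence `Σ_t δ_t |NFbdNE^(t)| = Σ_t δ_t Σ_{NFbdNE^(t)} (x̃ + (1 − x̃))` is bounded by
`Σ_t δ_t (Σ_{E^(t)} x̃ + Σ_{NE^(t)} (1 − x̃)) = Val(x̃)`.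
-/

lemma min_mul_one_le_add_of_le_add {s a b c : ℝ} (hs : 0 ≤ s) (hb : 0 ≤ b) (hc : 0 ≤ c)
    (h : a ≤ b + c) : min (s * a) 1 ≤ min (s * b) 1 + min (s * c) 1 := by
  have hsb : 0 ≤ min (s * b) 1 := le_min (mul_nonneg hs hb) zero_le_one
  have hsc : 0 ≤ min (s * c) 1 := le_min (mul_nonneg hs hc) zero_le_one
  rcases le_total 1 (s * b) with h1 | h1
  · linarith [min_eq_right h1, min_le_right (s * a) 1]
  rcases le_total 1 (s * c) with h2 | h2
  · linarith [min_eq_right h2, min_le_right (s * a) 1]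
  rw [min_eq_left h1, min_eq_left h2]
  exact (min_le_left _ _).trans (by nlinarith)

lemma exists_pos_forall_one_add_mul_le_one {ι : Type*} (S : Finset ι) (f : ι → ℝ)
    (hf : ∀ i ∈ S, f i < 1) : ∃ ε > 0, ∀ i ∈ S, (1 + ε) * f i ≤ 1 := by
  have hsmall : ∀ᶠ ε in nhdsWithin (0 : ℝ) (Set.Ioi 0), ∀ i ∈ S, (1 + ε) * f i ≤ 1 := by
    refine (Filter.eventually_all_finset S).2 fun i hi => ?_
    have hcont : Continuous fun ε : ℝ => (1 + ε) * f i := by fun_prop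
    exact nhdsWithin_le_nhds ((hcont.tendsto' 0 (f i) (by simp)).eventually
      (eventually_le_nhds (hf i hi)))
  exact (hsmall.and self_mem_nhdsWithin).exists.imp fun ε h => ⟨h.2, h.1⟩

noncomputable def cappedScale {V : Type*} (s : ℝ) (x : ℕ → Sym2 V → ℝ) : ℕ → Sym2 V → ℝ :=
  fun t e => min (s * x t e) 1

lemma LPStarFeasible.cappedScale {V : Type*} {ℓ : ℕ} {x : ℕ → Sym2 V → ℝ} (hx : LPStarFeasible ℓ x)
    {s : ℝ} (hs : 0 ≤ s) : LPStarFeasible ℓ (cappedScale s x) := by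
  obtain ⟨hdiag, htri, hbd, hmono⟩ := hx
  refine ⟨fun t ht u => ?_, fun t ht u v p => ?_, fun t ht e => ?_, fun t ht hℓ e => ?_⟩
  · simp [_root_.cappedScale, hdiag t ht u]
  · exact min_mul_one_le_add_of_le_add hs (hbd t ht _).1 (hbd t ht _).1 (htri t ht u v p)
  · exact ⟨le_min (mul_nonneg hs (hbd t ht e).1) zero_le_one, min_le_right _ _⟩
  · exact min_le_min_right 1 (mul_le_mul_of_nonneg_left (hmono t ht hℓ e) hs)

lemma sum_one_sub_min_mul_le {α : Type*} (N : Finset α) (f : α → ℝ) {ε : ℝ} (hε : 0 ≤ ε)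
    (hf : ∀ e ∈ N, 0 ≤ f e ∧ f e ≤ 1) (hfε : ∀ e ∈ N, f e < 1 → (1 + ε) * f e ≤ 1) :
    ∑ e ∈ N, (1 - min ((1 + ε) * f e) 1)
      ≤ ∑ e ∈ N, (1 - f e) - ε * ∑ e ∈ N with f e < 1, f e := by
  rw [sum_filter, mul_sum, ← sum_sub_distrib]
  refine sum_le_sum fun e he => ?_
  split_ifs with hlt
  · rw [min_eq_left (hfε e he hlt)]
    linarith
  · have hone : f e = 1 := le_antisymm (hf e he).2 (not_lt.1 hlt)
    simp [hone, hε]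

section Optimality

variable {V : Type*} [Fintype V] [DecidableEq V]

def nonEdges (E : Finset (Sym2 V)) : Finset (Sym2 V) :=
  univ.filter (fun e : Sym2 V => ¬ e.IsDiag) \ E

lemma LPStarVal_eq (ℓ : ℕ) (δ : ℕ → ℝ) (E : ℕ → Finset (Sym2 V)) (x : ℕ → Sym2 V → ℝ) :
    LPStarVal ℓ δ E x =
      ∑ t ∈ Icc 1 ℓ, δ t * (∑ e ∈ E t, x t e + ∑ e ∈ nonEdges (E t), (1 - x t e)) :=
  rfl

lemma LPStarVal_cappedScale_le {ℓ : ℕ} {δ : ℕ → ℝ} (hδ : ∀ t, 0 ≤ δ t)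
    (E : ℕ → Finset (Sym2 V)) {x : ℕ → Sym2 V → ℝ}
    (hbd : ∀ t ∈ Icc 1 ℓ, ∀ e, 0 ≤ x t e ∧ x t e ≤ 1) {ε : ℝ} (hε : 0 ≤ ε)
    (hxε : ∀ t ∈ Icc 1 ℓ, ∀ e, x t e < 1 → (1 + ε) * x t e ≤ 1) :
    LPStarVal ℓ δ E (cappedScale (1 + ε) x) ≤ LPStarVal ℓ δ E x +
      ε * (∑ t ∈ Icc 1 ℓ, δ t * ∑ e ∈ E t, x t e -
        ∑ t ∈ Icc 1 ℓ, δ t * ∑ e ∈ nonEdges (E t) with x t e < 1, x t e) := by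
  rw [LPStarVal_eq, LPStarVal_eq, mul_sub, mul_sum, mul_sum, ← sum_sub_distrib,
    ← sum_add_distrib]
  refine sum_le_sum fun t ht => ?_
  have hedges : ∑ e ∈ E t, min ((1 + ε) * x t e) 1 ≤ (1 + ε) * ∑ e ∈ E t, x t e :=
    mul_sum (E t) (x t) (1 + ε) ▸ sum_le_sum fun e _ => min_le_left _ _
  have hnonEdges := sum_one_sub_min_mul_le (nonEdges (E t)) (x t) hε
    (fun e _ => hbd t ht e) (fun e _ => hxε t ht e)
  exact (mul_le_mul_of_nonneg_left (add_le_add hedges hnonEdges) (hδ t)).trans_eq (by ring)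

lemma sum_forbidden_le_sum_edges_of_optimal {ℓ : ℕ} {δ : ℕ → ℝ} (hδ : ∀ t, 0 ≤ δ t)
    (E : ℕ → Finset (Sym2 V)) {x : ℕ → Sym2 V → ℝ} (hfeas : LPStarFeasible ℓ x)
    (hopt : ∀ y, LPStarFeasible ℓ y → LPStarVal ℓ δ E x ≤ LPStarVal ℓ δ E y) :
    ∑ t ∈ Icc 1 ℓ, δ t * ∑ e ∈ nonEdges (E t) with x t e < 1, x t e
      ≤ ∑ t ∈ Icc 1 ℓ, δ t * ∑ e ∈ E t, x t e := by
  have hbd := hfeas.2.2.1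
  obtain ⟨ε, hεpos, hε⟩ := exists_pos_forall_one_add_mul_le_one
    ((Icc 1 ℓ ×ˢ univ).filter fun p : ℕ × Sym2 V => x p.1 p.2 < 1) (fun p => x p.1 p.2)
    (fun p hp => (mem_filter.1 hp).2)
  have hxε : ∀ t ∈ Icc 1 ℓ, ∀ e, x t e < 1 → (1 + ε) * x t e ≤ 1 := fun t ht e hlt =>
    hε (t, e) (mem_filter.2 ⟨mem_product.2 ⟨ht, mem_univ e⟩, hlt⟩)
  have hval := (hopt _ (hfeas.cappedScale (by linarith))).trans
    (LPStarVal_cappedScale_le hδ E hbd hεpos.le hxε)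
  exact sub_nonneg.1 ((mul_nonneg_iff_of_pos_left hεpos).1 (by linarith))

lemma ncard_forbidden_eq (E : Finset (Sym2 V)) (f : Sym2 V → ℝ) :
    {e : Sym2 V | ¬ e.IsDiag ∧ e ∉ E ∧ f e < 1}.ncard = #{e ∈ nonEdges E | f e < 1} := by
  rw [← Set.ncard_coe_finset]
  congr 1
  ext e
  simp [nonEdges, and_assoc]

lemma card_forbidden_le (E : Finset (Sym2 V)) (f : Sym2 V → ℝ) (hf : ∀ e, f e ≤ 1) :
    (#{e ∈ nonEdges E | f e < 1} : ℝ)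
      ≤ ∑ e ∈ nonEdges E with f e < 1, f e + ∑ e ∈ nonEdges E, (1 - f e) := calc
  (#{e ∈ nonEdges E | f e < 1} : ℝ)
      = ∑ e ∈ nonEdges E with f e < 1, (f e + (1 - f e)) := by simp
  _ ≤ ∑ e ∈ nonEdges E with f e < 1, f e + ∑ e ∈ nonEdges E, (1 - f e) := by
    rw [sum_add_distrib]
    exact add_le_add le_rfl (sum_le_sum_of_subset_of_nonneg (filter_subset (f · < 1) _)
      fun e _ _ => sub_nonneg.2 (hf e))

end Optimality

theorem stmt2_general (V : Type*) [Fintype V] [DecidableEq V]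
    (ℓ : ℕ)
    (δ : ℕ → ℝ) (hδ : ∀ t, 0 ≤ δ t)
    (E : ℕ → Finset (Sym2 V))
    (x : ℕ → Sym2 V → ℝ)
    (hfeas : LPStarFeasible ℓ x)
    (hopt : ∀ y : ℕ → Sym2 V → ℝ, LPStarFeasible ℓ y →
      LPStarVal ℓ δ E x ≤ LPStarVal ℓ δ E y) :
    ∑ t ∈ Finset.Icc 1 ℓ,
        δ t * (({e : Sym2 V | ¬ e.IsDiag ∧ e ∉ E t ∧ x t e < 1}).ncard : ℝ)
      ≤ LPStarVal ℓ δ E x := by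
  have hlayer : ∀ t ∈ Icc 1 ℓ,
      δ t * ({e : Sym2 V | ¬ e.IsDiag ∧ e ∉ E t ∧ x t e < 1}.ncard : ℝ)
        ≤ δ t * ∑ e ∈ nonEdges (E t) with x t e < 1, x t e
          + δ t * ∑ e ∈ nonEdges (E t), (1 - x t e) := fun t ht => by
    rw [ncard_forbidden_eq, ← mul_add]
    exact mul_le_mul_of_nonneg_left
      (card_forbidden_le (E t) (x t) fun e => (hfeas.2.2.1 t ht e).2) (hδ t)
  calc _ ≤ _ := sum_le_sum hlayer
    _ = _ := sum_add_distrib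
    _ ≤ ∑ t ∈ Icc 1 ℓ, δ t * ∑ e ∈ E t, x t e
          + ∑ t ∈ Icc 1 ℓ, δ t * ∑ e ∈ nonEdges (E t), (1 - x t e) :=
      add_le_add_left (sum_forbidden_le_sum_edges_of_optimal hδ E hfeas hopt) _
    _ = LPStarVal ℓ δ E x := by
      rw [LPStarVal_eq, ← sum_add_distrib]
      simp only [mul_add]

/-- Any optimal solution `x̃` of LP-(*) satisfies
`Val(x̃) ≥ Σ_t δ_t · |NFbdNE^(t)|`, where
`NFbdNE^(t) = {{u,v} ∈ NE^(t) : x̃^(t){u,v} < 1}` is the set of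
non-forbidden non-edge pairs at layer `t`. -/
theorem stmt2 (V : Type*) [Fintype V] [DecidableEq V]
    (ℓ : ℕ) (hℓ : 1 ≤ ℓ)
    (δ : ℕ → ℝ) (hδ : ∀ t, 0 ≤ δ t)
    (E : ℕ → Finset (Sym2 V)) (hE : ∀ t, ∀ e ∈ E t, ¬ e.IsDiag)
    (x : ℕ → Sym2 V → ℝ)
    (hfeas : LPStarFeasible ℓ x)
    (hopt : ∀ y : ℕ → Sym2 V → ℝ, LPStarFeasible ℓ y →
      LPStarVal ℓ δ E x ≤ LPStarVal ℓ δ E y) :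
    ∑ t ∈ Finset.Icc 1 ℓ,
        δ t * (({e : Sym2 V | ¬ e.IsDiag ∧ e ∉ E t ∧ x t e < 1}).ncard : ℝ)
      ≤ LPStarVal ℓ δ E x :=
  stmt2_general V ℓ δ hδ E x hfeas hopt
end

section
/- Let x̃ be an optimal solution of LP-(L0), i.e., a feasible solution whose objective value is minimal among all feasible solutions. Then Σ_{u≠v} ((1 − x̃^(t_{u,v})(u,v)) + x̃^(t_{u,v}+1)(u,v)) ≥ |NFbd|, where NFbd := {{u,v} : x̃^(t_{u,v})(u,v) < 1}. -/
/-! Scaling a feasible solution by `k ≥ 0` and truncating at `1` keeps it feasible (truncation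
preserves the triangle inequality). For `k > 1` close enough to `1` the pairs with
`x^(t) < 1` stay below the cap, so the objective drops by at least `k - 1` times
`Σ_{NFbd} (x^(t) - x^(t+1)) - Σ_{forbidden} x^(t+1)`. Optimality forces this quantity to be
`≤ 0`, and the objective equals `|NFbd|` minus it. -/

open Finset
open scoped Classical

/-- Feasibility for LP-(L0): each layer `t ∈ {1,…,ℓ}` carries a `[0,1]`-valued
function on unordered pairs (vanishing on the diagonal) satisfying the
triangle inequality, the values are monotone non-increasing bottom-up, and the
convention `x^(ℓ+1) := 0` holds. -/
def LPL0Feasible {V : Type*} (ℓ : ℕ) (x : ℕ → Sym2 V → ℝ) : Prop :=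
  (∀ t ∈ Finset.Icc 1 ℓ, ∀ u : V, x t s(u, u) = 0) ∧
  (∀ t ∈ Finset.Icc 1 ℓ, ∀ u v p : V, x t s(u, v) ≤ x t s(u, p) + x t s(p, v)) ∧
  (∀ t ∈ Finset.Icc 1 ℓ, ∀ e : Sym2 V, 0 ≤ x t e ∧ x t e ≤ 1) ∧
  (∀ t, 1 ≤ t → t < ℓ → ∀ e : Sym2 V, x (t + 1) e ≤ x t e) ∧
  (∀ e : Sym2 V, x (ℓ + 1) e = 0)

/-- The objective value of LP-(L0):
`Σ_{{u,v}, u≠v} ((1 − x^(t_{u,v}){u,v}) + x^(t_{u,v}+1){u,v})`. -/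
noncomputable def LPL0Val {V : Type*} [Fintype V] [DecidableEq V]
    (tlay : Sym2 V → ℕ) (x : ℕ → Sym2 V → ℝ) : ℝ :=
  ∑ e ∈ Finset.univ.filter (fun e : Sym2 V => ¬ e.IsDiag),
    ((1 - x (tlay e) e) + x (tlay e + 1) e)

theorem min_one_mul_le_add {k a b c : ℝ} (hk : 0 ≤ k) (habc : a ≤ b + c) (hb : 0 ≤ b)
    (hc : 0 ≤ c) : min 1 (k * a) ≤ min 1 (k * b) + min 1 (k * c) := by
  simp only [min_def]
  split_ifs <;> nlinarith

theorem exists_one_lt_forall_mul_le_one {ι : Type*} (s : Finset ι) (f : ι → ℝ)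
    (hf : ∀ i ∈ s, f i < 1) : ∃ k : ℝ, 1 < k ∧ ∀ i ∈ s, k * f i ≤ 1 := by
  have hnear : ∀ᶠ k in nhds (1 : ℝ), ∀ i ∈ s, k * f i < 1 := by
    refine (Filter.eventually_all_finset s).2 fun i hi => ?_
    have hlim : Filter.Tendsto (fun k : ℝ => k * f i) (nhds 1) (nhds (1 * f i)) :=
      (continuous_id.mul continuous_const).tendsto 1
    exact hlim.eventually_lt_const (by simpa using hf i hi)
  obtain ⟨k, hsmall, hk⟩ :=
    ((hnear.filter_mono nhdsWithin_le_nhds).and (eventually_mem_nhdsWithin (s := Set.Ioi 1))).exists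
  exact ⟨k, hk, fun i hi => (hsmall i hi).le⟩

/-- Rate at which `k ↦ 1 - min 1 (k a) + min 1 (k b)` decreases at `k = 1⁺` when `a ≤ 1`. -/
noncomputable def scalingGain (a b : ℝ) : ℝ :=
  if a < 1 then a - b else -b

theorem one_sub_add_eq_ite_sub_scalingGain {a : ℝ} (b : ℝ) (ha : a ≤ 1) :
    1 - a + b = (if a < 1 then 1 else 0) - scalingGain a b := by
  unfold scalingGain
  split_ifs with h
  · ring
  · obtain rfl : a = 1 := le_antisymm ha (not_lt.1 h)
    ring

theorem one_sub_min_add_min_le {k a : ℝ} (b : ℝ) (hk : 1 ≤ k) (ha : a ≤ 1)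
    (hka : a < 1 → k * a ≤ 1) :
    1 - min 1 (k * a) + min 1 (k * b) ≤ 1 - a + b - (k - 1) * scalingGain a b := by
  have hkb : min 1 (k * b) ≤ k * b := min_le_right _ _
  unfold scalingGain
  split_ifs with h
  · rw [min_eq_right (hka h)]
    linarith
  · obtain rfl : a = 1 := le_antisymm ha (not_lt.1 h)
    rw [mul_one, min_eq_left hk]
    linarith

noncomputable def truncScale {V : Type*} (k : ℝ) (x : ℕ → Sym2 V → ℝ) :
    ℕ → Sym2 V → ℝ :=
  fun t e => min 1 (k * x t e)

section

variable {V : Type*} {ℓ : ℕ} {x : ℕ → Sym2 V → ℝ}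

theorem LPL0Feasible.truncScale (hx : LPL0Feasible ℓ x) {k : ℝ} (hk : 0 ≤ k) :
    LPL0Feasible ℓ (truncScale k x) := by
  obtain ⟨hdiag, htri, hbd, hmono, htop⟩ := hx
  refine ⟨fun t ht u => ?_, fun t ht u v p => ?_, fun t ht e => ?_, fun t h1 h2 e => ?_,
    fun e => ?_⟩
  · simp [_root_.truncScale, hdiag t ht u]
  · exact min_one_mul_le_add hk (htri t ht u v p) (hbd t ht _).1 (hbd t ht _).1
  · exact ⟨le_min zero_le_one (mul_nonneg hk (hbd t ht e).1), min_le_left _ _⟩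
  · exact min_le_min_left _ (mul_le_mul_of_nonneg_left (hmono t h1 h2 e) hk)
  · simp [_root_.truncScale, htop e]

variable [Fintype V] [DecidableEq V] {tlay : Sym2 V → ℕ}

theorem LPL0Val_truncScale_le (hx : LPL0Feasible ℓ x)
    (htrange : ∀ e : Sym2 V, ¬ e.IsDiag → tlay e ∈ Icc 1 ℓ) {k : ℝ} (hk : 1 ≤ k)
    (hkx : ∀ e : Sym2 V, ¬ e.IsDiag → x (tlay e) e < 1 → k * x (tlay e) e ≤ 1) :
    LPL0Val tlay (truncScale k x) ≤ LPL0Val tlay x - (k - 1) *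
      ∑ e ∈ univ.filter (fun e : Sym2 V => ¬ e.IsDiag),
        scalingGain (x (tlay e) e) (x (tlay e + 1) e) := by
  rw [LPL0Val, LPL0Val, mul_sum, ← sum_sub_distrib]
  refine sum_le_sum fun e he => ?_
  have hdiag : ¬ e.IsDiag := (mem_filter.1 he).2
  exact one_sub_min_add_min_le _ hk (hx.2.2.1 _ (htrange e hdiag) e).2 (hkx e hdiag)

theorem LPL0Val_eq_card_sub_sum_scalingGain (hx : LPL0Feasible ℓ x)
    (htrange : ∀ e : Sym2 V, ¬ e.IsDiag → tlay e ∈ Icc 1 ℓ) :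
    LPL0Val tlay x = #(univ.filter fun e : Sym2 V => ¬ e.IsDiag ∧ x (tlay e) e < 1) -
      ∑ e ∈ univ.filter (fun e : Sym2 V => ¬ e.IsDiag),
        scalingGain (x (tlay e) e) (x (tlay e + 1) e) := by
  rw [LPL0Val, sum_congr rfl fun e he => one_sub_add_eq_ite_sub_scalingGain _
      (hx.2.2.1 _ (htrange e (mem_filter.1 he).2) e).2,
    sum_sub_distrib, sum_boole, filter_filter]

end

theorem stmt3_general (V : Type*) [Fintype V] [DecidableEq V]
    (ℓ : ℕ)
    (tlay : Sym2 V → ℕ)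
    (htrange : ∀ e : Sym2 V, ¬ e.IsDiag → tlay e ∈ Finset.Icc 1 ℓ)
    (x : ℕ → Sym2 V → ℝ)
    (hfeas : LPL0Feasible ℓ x)
    (hopt : ∀ y : ℕ → Sym2 V → ℝ, LPL0Feasible ℓ y →
      LPL0Val tlay x ≤ LPL0Val tlay y) :
    (({e : Sym2 V | ¬ e.IsDiag ∧ x (tlay e) e < 1}).ncard : ℝ)
      ≤ LPL0Val tlay x := by
  obtain ⟨k, hk1, hk⟩ := exists_one_lt_forall_mul_le_one
    (univ.filter fun e : Sym2 V => ¬ e.IsDiag ∧ x (tlay e) e < 1) (fun e => x (tlay e) e)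
    fun e he => (mem_filter.1 he).2.2
  have hscaled := (hopt _ (hfeas.truncScale (by linarith))).trans
    (LPL0Val_truncScale_le hfeas htrange hk1.le fun e he h => hk e (by simp [he, h]))
  have hgain : ∑ e ∈ univ.filter (fun e : Sym2 V => ¬ e.IsDiag),
      scalingGain (x (tlay e) e) (x (tlay e + 1) e) ≤ 0 :=
    nonpos_of_mul_nonpos_left (by linarith) (sub_pos.2 hk1)
  rw [Set.ncard_eq_toFinset_card', Set.toFinset_ofPred,
    LPL0Val_eq_card_sub_sum_scalingGain hfeas htrange]
  linarith

/-- Any optimal solution `x̃` of LP-(L0) satisfies `Val(x̃) ≥ |NFbd|`, where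
`NFbd = {{u,v} : x̃^(t_{u,v}){u,v} < 1}` is the set of non-forbidden pairs. -/
theorem stmt3 (V : Type*) [Fintype V] [DecidableEq V]
    (ℓ : ℕ) (hℓ : 1 ≤ ℓ)
    (tlay : Sym2 V → ℕ)
    (htrange : ∀ e : Sym2 V, ¬ e.IsDiag → tlay e ∈ Finset.Icc 1 ℓ)
    (x : ℕ → Sym2 V → ℝ)
    (hfeas : LPL0Feasible ℓ x)
    (hopt : ∀ y : ℕ → Sym2 V → ℝ, LPL0Feasible ℓ y →
      LPL0Val tlay x ≤ LPL0Val tlay y) :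
    (({e : Sym2 V | ¬ e.IsDiag ∧ x (tlay e) e < 1}).ncard : ℝ)
      ≤ LPL0Val tlay x :=
  stmt3_general V ℓ tlay htrange x hfeas hopt
end

section
/- Let V be a finite set and let x, x' : V × V → ℝ be symmetric nonnegative functions with x(u,u) = x'(u,u) = 0, each satisfying the triangle inequality, with x(u,v) ≤ x'(u,v) for all u,v (x is the layer-t distance, x' the layer-(t−1) distance). Let Q, Q' ⊆ V be disjoint sets with diam_x(Q) < 1/3 and diam_x(Q') < 1/3, let P ⊆ V, and suppose there exist p ∈ P ∩ Q and q ∈ P ∩ Q' with x'(p,q) < 1/3. Then for every α with 0 < α < 1 it cannot hold simultaneously that |{w ∈ P \ Q : min_{u∈P∩Q} x(w,u) < 2/3}| < α·|P ∩ Q| and |{w ∈ P \ Q' : min_{u∈P∩Q'} x(w,u) < 2/3}| < α·|P ∩ Q'|. (This is the key geometric fact proving Lemma 3.1, that the merge candidates Candi^(t)(Q) and Candi^(t)(Q') of distinct pre-clusters Q ≠ Q' are disjoint.) -/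
/-!
The short bridge `x p q ≤ x' p q < 1/3` and the diameter bound put every point of `P ∩ Q'`
within `2/3` of `p ∈ P ∩ Q`, so `P ∩ Q' ⊆ Ball_{<2/3}(P ∩ Q, P ∖ Q)`, and symmetrically.
Each ball is thus at least as large as the opposite intersection, and the two inequalities
would give `|P ∩ Q| + |P ∩ Q'| < α (|P ∩ Q| + |P ∩ Q'|)`, impossible for `α < 1`.
-/

/-- `Ball_{<r}(S, P)`. -/
def ballLt {V : Type*} (x : V → V → ℝ) (r : ℝ) (S P : Set V) : Set V :=
  {w ∈ P | ∃ u ∈ S, x w u < r}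

lemma inter_subset_ballLt {V : Type*} (x : V → V → ℝ)
    (hxtri : ∀ u w p, x u w ≤ x u p + x p w) {Q Q' P : Set V} (hdisj : Disjoint Q Q')
    {r s t : ℝ} (hdiamQ' : ∀ u ∈ Q', ∀ w ∈ Q', x u w < r) {p q : V}
    (hp : p ∈ P ∩ Q) (hq : q ∈ P ∩ Q') (hqp : x q p < s) (hrst : r + s ≤ t) :
    P ∩ Q' ⊆ ballLt x t (P ∩ Q) (P \ Q) := by
  rintro w ⟨hwP, hwQ'⟩
  refine ⟨⟨hwP, fun hwQ => hdisj.ne_of_mem hwQ hwQ' rfl⟩, p, hp, ?_⟩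
  linarith [hxtri w p q, hdiamQ' w hwQ' q hq.2]

lemma not_lt_mul_and_lt_mul {a b A B α : ℝ} (ha : 0 ≤ a) (hb : 0 ≤ b) (hα : α ≤ 1)
    (hA : b ≤ A) (hB : a ≤ B) : ¬ (A < α * a ∧ B < α * b) := by
  rintro ⟨hAa, hBb⟩
  nlinarith

theorem stmt4_general (V : Type*) [Fintype V]
    (x x' : V → V → ℝ)
    (hxsym' : ∀ u w, x' u w = x' w u)
    (hxtri : ∀ u w p, x u w ≤ x u p + x p w)
    (hle : ∀ u w, x u w ≤ x' u w)
    (Q Q' P : Set V) (hdisj : Disjoint Q Q')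
    (hdiamQ : ∀ u ∈ Q, ∀ w ∈ Q, x u w < 1 / 3)
    (hdiamQ' : ∀ u ∈ Q', ∀ w ∈ Q', x u w < 1 / 3)
    (p q : V) (hp : p ∈ P ∩ Q) (hq : q ∈ P ∩ Q') (hpq : x' p q < 1 / 3)
    (α : ℝ) (hα1 : α < 1) :
    ¬ (((({w ∈ P \ Q | ∃ u ∈ P ∩ Q, x w u < 2 / 3}).ncard : ℝ)
          < α * ((P ∩ Q).ncard : ℝ)) ∧
       ((({w ∈ P \ Q' | ∃ u ∈ P ∩ Q', x w u < 2 / 3}).ncard : ℝ)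
          < α * ((P ∩ Q').ncard : ℝ))) := by
  have hpq_x : x p q < 1 / 3 := (hle p q).trans_lt hpq
  have hqp_x : x q p < 1 / 3 := (hle q p).trans_lt (hxsym' q p ▸ hpq)
  have hQ'_sub : P ∩ Q' ⊆ ballLt x (2 / 3) (P ∩ Q) (P \ Q) :=
    inter_subset_ballLt x hxtri hdisj hdiamQ' hp hq hqp_x (by norm_num)
  have hQ_sub : P ∩ Q ⊆ ballLt x (2 / 3) (P ∩ Q') (P \ Q') :=
    inter_subset_ballLt x hxtri hdisj.symm hdiamQ hq hp hpq_x (by norm_num)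
  exact not_lt_mul_and_lt_mul (Nat.cast_nonneg _) (Nat.cast_nonneg _) hα1.le
    (mod_cast Set.ncard_le_ncard hQ'_sub (Set.toFinite _))
    (mod_cast Set.ncard_le_ncard hQ_sub (Set.toFinite _))

/-- The key geometric fact behind the disjointness of merge candidate sets
(Lemma 3.1): let `x ≤ x'` be two (pseudo)metrics on a finite set `V`
(layer-`t` and layer-`(t−1)` distances), let `Q, Q'` be disjoint sets of
diameter `< 1/3` w.r.t. `x`, let `P ⊆ V`, and suppose there are
`p ∈ P ∩ Q`, `q ∈ P ∩ Q'` with `x'(p,q) < 1/3`.  Then for every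
`0 < α < 1` it cannot simultaneously hold that
`|Ball_{<2/3}(P∩Q, P∖Q)| < α·|P∩Q|` and
`|Ball_{<2/3}(P∩Q', P∖Q')| < α·|P∩Q'|`. -/
theorem stmt4 (V : Type*) [Fintype V]
    (x x' : V → V → ℝ)
    (hxsym : ∀ u w, x u w = x w u) (hxsym' : ∀ u w, x' u w = x' w u)
    (hxnn : ∀ u w, 0 ≤ x u w) (hxnn' : ∀ u w, 0 ≤ x' u w)
    (hxdiag : ∀ u, x u u = 0) (hxdiag' : ∀ u, x' u u = 0)
    (hxtri : ∀ u w p, x u w ≤ x u p + x p w)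
    (hxtri' : ∀ u w p, x' u w ≤ x' u p + x' p w)
    (hle : ∀ u w, x u w ≤ x' u w)
    (Q Q' P : Set V) (hdisj : Disjoint Q Q')
    (hdiamQ : ∀ u ∈ Q, ∀ w ∈ Q, x u w < 1 / 3)
    (hdiamQ' : ∀ u ∈ Q', ∀ w ∈ Q', x u w < 1 / 3)
    (p q : V) (hp : p ∈ P ∩ Q) (hq : q ∈ P ∩ Q') (hpq : x' p q < 1 / 3)
    (α : ℝ) (hα0 : 0 < α) (hα1 : α < 1) :
    ¬ (((({w ∈ P \ Q | ∃ u ∈ P ∩ Q, x w u < 2 / 3}).ncard : ℝ)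
          < α * ((P ∩ Q).ncard : ℝ)) ∧
       ((({w ∈ P \ Q' | ∃ u ∈ P ∩ Q', x w u < 2 / 3}).ncard : ℝ)
          < α * ((P ∩ Q').ncard : ℝ))) :=
  stmt4_general V x x' hxsym' hxtri hle Q Q' P hdisj hdiamQ hdiamQ' p q hp hq hpq α hα1
end

section
/- Let Q ⊆ V, v ∈ Q with max_{u∈Q} x(v,u) ≥ 1/3, and let (Q1, Q2) with v ∈ Q1 be the pair returned by One-Third-Refine-Cut(Q, v, x). Then Σ over pairs {i,j} ∈ NFPrs(Q1,Q2) with i ∈ Q1 and j ∈ Q2 ∩ B_{1/2} of ( min(x(v,j), 1/3) − x(v,i) ) is at least (1/6) times the number of such pairs. -/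
/-!
Every pair `i ∈ B_{1/3}`, `j ∈ B_{1/2}` has `x(i,j) < 1/3 + 1/2 < 1` by the triangle inequality
through `v`, and `Q1 ⊆ B_{1/3}` in both outcomes of the cut, so no pair in the sum is forbidden.
If the cut is `({v}, Q ∖ {v})`, the sum is `Σ_{q ∈ B_{1/3}} x(v,q) + (1/3)|B_{1/2} ∖ B_{1/3}|`
over `|B_{1/2}| - 1` pairs, and the test that selected this cut is exactly the required bound.
Otherwise every `j ∈ Q2 ∩ B_{1/2}` contributes `1/3`, and the failed test gives
`Σ_{i ∈ B_{1/3}} (1/3 - x(v,i)) > (|B_{1/2}| + 1)/6 ≥ |B_{1/3}|/6`.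
-/

open Finset
open scoped Classical

/-- `cutBall x v Q r` is the set of elements of `Q` at distance `< r` from `v`. -/
noncomputable def cutBall {V : Type*} [DecidableEq V]
    (x : V → V → ℝ) (v : V) (Q : Finset V) (r : ℝ) : Finset V :=
  Q.filter fun u => x v u < r

/-- The procedure One-Third-Refine-Cut: it returns `({v}, Q ∖ {v})` if
`Σ_{q∈B_{1/3}} x(v,q) ≥ (1/3)|B_{1/3}| − (1/6)|B_{1/2}| − 1/6`,
and `(B_{1/3}, Q ∖ B_{1/3})` otherwise. -/
noncomputable def oneThirdCut {V : Type*} [DecidableEq V]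
    (x : V → V → ℝ) (Q : Finset V) (v : V) : Finset V × Finset V :=
  if (1 / 3 : ℝ) * (cutBall x v Q (1 / 3)).card
        - (1 / 6) * (cutBall x v Q (1 / 2)).card - 1 / 6
      ≤ ∑ q ∈ cutBall x v Q (1 / 3), x v q
  then ({v}, Q \ {v})
  else (cutBall x v Q (1 / 3), Q \ cutBall x v Q (1 / 3))

/-- A pair `{i,j}` is forbidden when it is a non-edge pair of distance one. -/
def Forbidden {V : Type*} (E : V → V → Prop) (x : V → V → ℝ) (i j : V) : Prop :=
  ¬ E i j ∧ x i j = 1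

section
variable {V : Type*} [DecidableEq V] {x : V → V → ℝ} {v : V} {Q : Finset V}

lemma mem_cutBall {r : ℝ} {u : V} : u ∈ cutBall x v Q r ↔ u ∈ Q ∧ x v u < r := mem_filter

lemma cutBall_mono {r s : ℝ} (hrs : r ≤ s) : cutBall x v Q r ⊆ cutBall x v Q s :=
  fun _ hu => mem_cutBall.mpr ⟨(mem_cutBall.mp hu).1, (mem_cutBall.mp hu).2.trans_le hrs⟩

lemma self_mem_cutBall (hdiag : ∀ u, x u u = 0) (hv : v ∈ Q) {r : ℝ} (hr : 0 < r) :
    v ∈ cutBall x v Q r :=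
  mem_cutBall.mpr ⟨hv, by rwa [hdiag]⟩

lemma lt_add_of_mem_cutBall (hsym : ∀ u w, x u w = x w u)
    (htri : ∀ u w p, x u w ≤ x u p + x p w) {r s : ℝ} {i j : V}
    (hi : i ∈ cutBall x v Q r) (hj : j ∈ cutBall x v Q s) : x i j < r + s := by
  have := (mem_cutBall.mp hi).2
  have := (mem_cutBall.mp hj).2
  linarith [htri i j v, hsym i v]

lemma sum_min_cutBall {r s : ℝ} (hrs : r ≤ s) :
    ∑ j ∈ cutBall x v Q s, min (x v j) r
      = ∑ j ∈ cutBall x v Q r, x v j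
        + r * ((#(cutBall x v Q s) : ℝ) - #(cutBall x v Q r)) := by
  have hsub := cutBall_mono (x := x) (v := v) (Q := Q) hrs
  have houter : ∀ j ∈ cutBall x v Q s \ cutBall x v Q r, min (x v j) r = r := by
    intro j hj
    rw [mem_sdiff, mem_cutBall, mem_cutBall] at hj
    exact min_eq_right (not_lt.mp fun h => hj.2 ⟨hj.1.1, h⟩)
  have hinner : ∀ j ∈ cutBall x v Q r, min (x v j) r = x v j :=
    fun j hj => min_eq_left (mem_cutBall.mp hj).2.le
  rw [← sum_sdiff hsub, sum_congr rfl houter, sum_congr rfl hinner, sum_const, nsmul_eq_mul,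
    cast_card_sdiff hsub]
  ring

lemma oneThirdCut_fst_subset (hdiag : ∀ u, x u u = 0) (hv : v ∈ Q) :
    (oneThirdCut x Q v).1 ⊆ cutBall x v Q (1 / 3) := by
  unfold oneThirdCut
  split_ifs
  · exact singleton_subset_iff.mpr (self_mem_cutBall hdiag hv (by norm_num))
  · exact Subset.rfl

lemma sum_singleton_cut_ge (hdiag : ∀ u, x u u = 0) (hv : v ∈ Q)
    (htest : (1 / 3 : ℝ) * #(cutBall x v Q (1 / 3)) - (1 / 6) * #(cutBall x v Q (1 / 2)) - 1 / 6
      ≤ ∑ q ∈ cutBall x v Q (1 / 3), x v q) :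
    (1 / 6 : ℝ) * #({v} ×ˢ ((Q \ {v}) ∩ cutBall x v Q (1 / 2)))
      ≤ ∑ p ∈ {v} ×ˢ ((Q \ {v}) ∩ cutBall x v Q (1 / 2)), (min (x v p.2) (1 / 3) - x v p.1) := by
  have hvB : v ∈ cutBall x v Q (1 / 2) := self_mem_cutBall hdiag hv (by norm_num)
  have hpartners : (Q \ {v}) ∩ cutBall x v Q (1 / 2) = (cutBall x v Q (1 / 2)).erase v := by
    ext u
    simp only [mem_inter, mem_sdiff, mem_singleton, mem_erase, mem_cutBall]
    tauto
  have hcard : #(cutBall x v Q (1 / 3)) ≤ #(cutBall x v Q (1 / 2)) :=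
    card_le_card (cutBall_mono (by norm_num))
  rw [hpartners, sum_product, sum_singleton, card_product, card_singleton, one_mul,
    card_erase_of_mem hvB, Nat.cast_sub (card_pos.mpr ⟨v, hvB⟩)]
  simp only [hdiag, sub_zero]
  rw [sum_erase _ (by simp [hdiag]), sum_min_cutBall (by norm_num)]
  push_cast
  linarith [(Nat.cast_le (α := ℝ)).mpr hcard]

lemma sum_ball_cut_ge
    (htest : ∑ q ∈ cutBall x v Q (1 / 3), x v q
      < (1 / 3 : ℝ) * #(cutBall x v Q (1 / 3)) - (1 / 6) * #(cutBall x v Q (1 / 2)) - 1 / 6) :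
    (1 / 6 : ℝ) * #(cutBall x v Q (1 / 3) ×ˢ ((Q \ cutBall x v Q (1 / 3)) ∩ cutBall x v Q (1 / 2)))
      ≤ ∑ p ∈ cutBall x v Q (1 / 3) ×ˢ ((Q \ cutBall x v Q (1 / 3)) ∩ cutBall x v Q (1 / 2)),
          (min (x v p.2) (1 / 3) - x v p.1) := by
  set B := cutBall x v Q (1 / 3)
  set T := (Q \ B) ∩ cutBall x v Q (1 / 2)
  have hfar : ∀ j ∈ T, min (x v j) (1 / 3) = 1 / 3 := by
    intro j hj
    rw [mem_inter, mem_sdiff, mem_cutBall] at hj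
    exact min_eq_right (not_lt.mp fun h => hj.1.2 ⟨hj.1.1, h⟩)
  have hrow : ∀ j ∈ T, ∑ i ∈ B, (min (x v j) (1 / 3) - x v i) = #B / 3 - ∑ i ∈ B, x v i := by
    intro j hj
    rw [hfar j hj, sum_sub_distrib, sum_const, nsmul_eq_mul]
    ring
  have hcard : #B ≤ #(cutBall x v Q (1 / 2)) := card_le_card (cutBall_mono (by norm_num))
  have hgain : (#B : ℝ) / 6 ≤ #B / 3 - ∑ i ∈ B, x v i := by
    linarith [(Nat.cast_le (α := ℝ)).mpr hcard]
  rw [sum_product_right, sum_congr rfl hrow, sum_const, nsmul_eq_mul, card_product]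
  push_cast
  calc (1 / 6 : ℝ) * (#B * #T) = #T * (#B / 6) := by ring
    _ ≤ _ := mul_le_mul_of_nonneg_left hgain (Nat.cast_nonneg _)

end

theorem stmt5_general {V : Type*} [DecidableEq V]
    (x : V → V → ℝ)
    (hsym : ∀ u w, x u w = x w u) (hdiag : ∀ u, x u u = 0)
    (htri : ∀ u w p, x u w ≤ x u p + x p w)
    (E : V → V → Prop)
    (Q : Finset V) (v : V) (hv : v ∈ Q)
    (Q1 Q2 : Finset V) (hcut : (Q1, Q2) = oneThirdCut x Q v) :
    (1 / 6 : ℝ) *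
        ((Q1 ×ˢ (Q2 ∩ cutBall x v Q (1 / 2))).filter
            (fun p => ¬ Forbidden E x p.1 p.2)).card
      ≤ ∑ p ∈ (Q1 ×ˢ (Q2 ∩ cutBall x v Q (1 / 2))).filter
            (fun p => ¬ Forbidden E x p.1 p.2),
          (min (x v p.2) (1 / 3) - x v p.1) := by
  obtain ⟨rfl, rfl⟩ := Prod.ext_iff.mp hcut
  have hnotForbidden : ∀ p ∈ (oneThirdCut x Q v).1 ×ˢ
      ((oneThirdCut x Q v).2 ∩ cutBall x v Q (1 / 2)), ¬ Forbidden E x p.1 p.2 := by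
    intro p hp hforb
    rw [mem_product, mem_inter] at hp
    have := lt_add_of_mem_cutBall hsym htri (oneThirdCut_fst_subset hdiag hv hp.1) hp.2.2
    linarith [hforb.2]
  rw [filter_true_of_mem hnotForbidden]
  unfold oneThirdCut
  split_ifs with htest
  · exact sum_singleton_cut_ge hdiag hv htest
  · exact sum_ball_cut_ge (not_le.mp htest)

/-- Average distance of non-forbidden cut pairs (Lemma 4.4): for the pair
`(Q1, Q2)` returned by One-Third-Refine-Cut, the sum of
`min(x(v,j), 1/3) − x(v,i)` over the non-forbidden pairs `{i,j}` with `i ∈ Q1`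
and `j ∈ Q2 ∩ B_{1/2}` is at least `1/6` times the number of such pairs. -/
theorem stmt5 {V : Type*} [Fintype V] [DecidableEq V]
    (x : V → V → ℝ)
    (hsym : ∀ u w, x u w = x w u) (hdiag : ∀ u, x u u = 0)
    (hnn : ∀ u w, 0 ≤ x u w) (hub : ∀ u w, x u w ≤ 1)
    (htri : ∀ u w p, x u w ≤ x u p + x p w)
    (E : V → V → Prop) (hEsym : ∀ u w, E u w ↔ E w u) (hEirr : ∀ u, ¬ E u u)
    (Q : Finset V) (v : V) (hv : v ∈ Q) (hmax : ∃ u ∈ Q, 1 / 3 ≤ x v u)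
    (Q1 Q2 : Finset V) (hcut : (Q1, Q2) = oneThirdCut x Q v) :
    (1 / 6 : ℝ) *
        ((Q1 ×ˢ (Q2 ∩ cutBall x v Q (1 / 2))).filter
            (fun p => ¬ Forbidden E x p.1 p.2)).card
      ≤ ∑ p ∈ (Q1 ×ˢ (Q2 ∩ cutBall x v Q (1 / 2))).filter
            (fun p => ¬ Forbidden E x p.1 p.2),
          (min (x v p.2) (1 / 3) - x v p.1) :=
  stmt5_general x hsym hdiag htri E Q v hv Q1 Q2 hcut
end

section
/- Let x̃ be an optimal solution of LP-(*), let SV^(t) := {{u,v} : x̃^(t){u,v} < 1} and Fbd^(t) := {{u,v} ∈ NE^(t) : x̃^(t){u,v} = 1}, and let x̃* be the restriction of x̃ to the index set {(t,{u,v}) : {u,v} ∈ SV^(t)}. Then x̃* is an optimal solution of LP-(**): it is feasible for LP-(**) and its LP-(**) objective value is minimal among all feasible solutions of LP-(**). -/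
open Finset
open scoped Classical

/-- The surviving pairs at layer `t` of the optimal solution `x`:
`SV^(t) = {{u,v} : x^(t){u,v} < 1}` (pairs of distinct elements). -/
def SurvSV {V : Type*} (x : ℕ → Sym2 V → ℝ) (t : ℕ) : Set (Sym2 V) :=
  {e | ¬ e.IsDiag ∧ x t e < 1}

/-- Feasibility for LP-(**), whose variables are indexed by the surviving pairs
`SVs t` (a solution is recorded as a total function, only its values on
surviving pairs being meaningful): the surviving triangle inequalities, the
replaced triangle inequalities `y^(t)_{u,p} + y^(t)_{p,v} ≥ 1` for removed
third pairs, the surviving hierarchy constraints, and the `[0,1]` bounds. -/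
def LPStarStarFeasible {V : Type*} (ℓ : ℕ) (SVs : ℕ → Set (Sym2 V))
    (y : ℕ → Sym2 V → ℝ) : Prop :=
  (∀ t ∈ Finset.Icc 1 ℓ, ∀ u v p : V,
      s(u, p) ∈ SVs t → s(p, v) ∈ SVs t → s(u, v) ∈ SVs t →
      y t s(u, v) ≤ y t s(u, p) + y t s(p, v)) ∧
  (∀ t ∈ Finset.Icc 1 ℓ, ∀ u v p : V, u ≠ v →
      s(u, p) ∈ SVs t → s(p, v) ∈ SVs t → s(u, v) ∉ SVs t →
      1 ≤ y t s(u, p) + y t s(p, v)) ∧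
  (∀ t, 1 ≤ t → t < ℓ → ∀ e : Sym2 V,
      e ∈ SVs t → e ∈ SVs (t + 1) → y (t + 1) e ≤ y t e) ∧
  (∀ t ∈ Finset.Icc 1 ℓ, ∀ e ∈ SVs t, 0 ≤ y t e ∧ y t e ≤ 1)

/-- The objective value of LP-(**):
`Σ_t δ_t ( |E^(t)∖SV^(t)| + Σ_{{u,v}∈E^(t)∩SV^(t)} y^(t) +
  Σ_{{u,v}∈NE^(t)∖Fbd^(t)} (1 − y^(t)) )`. -/
noncomputable def LPStarStarVal {V : Type*} [Fintype V] [DecidableEq V]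
    (ℓ : ℕ) (δ : ℕ → ℝ) (E : ℕ → Finset (Sym2 V))
    (SVs : ℕ → Set (Sym2 V)) (Fbds : ℕ → Set (Sym2 V))
    (y : ℕ → Sym2 V → ℝ) : ℝ :=
  ∑ t ∈ Finset.Icc 1 ℓ, δ t *
    ((((E t).filter (fun e => e ∉ SVs t)).card : ℝ)
      + (∑ e ∈ (E t).filter (fun e => e ∈ SVs t), y t e)
      + ∑ e ∈ ((Finset.univ.filter (fun e : Sym2 V => ¬ e.IsDiag) \ E t).filter
            (fun e => e ∉ Fbds t)), (1 - y t e))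

/-!
The restriction of `x̃` satisfies LP-(**) because `x̃` satisfies LP-(*) and every removed pair
has value `1`. Conversely, a feasible `y` of LP-(**) extends to a feasible solution of LP-(*) by
giving every removed pair the value `1`: the replaced triangle inequalities are exactly what this
extension needs. On such extensions the two objectives agree (a pair of `E^(t) ∖ SV^(t)`
contributes `1`, a pair of `Fbd^(t)` contributes `0`), so optimality of `x̃` for LP-(*) transfers.
-/

/-- The set `Fbd^(t)` of the paper. -/
def forbiddenPairs {V : Type*} (E : ℕ → Finset (Sym2 V)) (x : ℕ → Sym2 V → ℝ) (t : ℕ) :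
    Set (Sym2 V) :=
  {e | ¬ e.IsDiag ∧ e ∉ E t ∧ x t e = 1}

noncomputable def extendByOne {V : Type*} (x y : ℕ → Sym2 V → ℝ) (t : ℕ) (e : Sym2 V) : ℝ :=
  if e.IsDiag then 0 else if e ∈ SurvSV x t then y t e else 1

section

variable {V : Type*}

lemma LPStarFeasible.lpStarStarFeasible_survSV {ℓ : ℕ} {x : ℕ → Sym2 V → ℝ}
    (hx : LPStarFeasible ℓ x) : LPStarStarFeasible ℓ (SurvSV x) x := by
  obtain ⟨-, htri, hbd, hmono⟩ := hx
  refine ⟨fun t ht u v p _ _ _ => htri t ht u v p, ?_, fun t h1 h2 e _ _ => hmono t h1 h2 e,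
    fun t ht e _ => hbd t ht e⟩
  intro t ht u v p huv _ _ huv_rem
  have : 1 ≤ x t s(u, v) := by
    by_contra! hlt
    exact huv_rem ⟨Sym2.mk_isDiag_iff.not.2 huv, hlt⟩
  linarith [htri t ht u v p]

variable {x y : ℕ → Sym2 V → ℝ}

lemma extendByOne_of_isDiag {t : ℕ} {e : Sym2 V} (he : e.IsDiag) : extendByOne x y t e = 0 :=
  if_pos he

lemma extendByOne_of_mem {t : ℕ} {e : Sym2 V} (he : e ∈ SurvSV x t) :
    extendByOne x y t e = y t e := by
  simp [extendByOne, he.1, he]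

lemma extendByOne_of_not_mem {t : ℕ} {e : Sym2 V} (hd : ¬ e.IsDiag) (he : e ∉ SurvSV x t) :
    extendByOne x y t e = 1 := by
  simp [extendByOne, hd, he]

variable {ℓ : ℕ}

lemma extendByOne_mem_Icc (hy : LPStarStarFeasible ℓ (SurvSV x) y) {t : ℕ} (ht : t ∈ Icc 1 ℓ)
    (e : Sym2 V) : extendByOne x y t e ∈ Set.Icc 0 1 := by
  unfold extendByOne
  split_ifs with hd hS
  exacts [by norm_num, hy.2.2.2 t ht e hS, by norm_num]

lemma extendByOne_triangle (hy : LPStarStarFeasible ℓ (SurvSV x) y) {t : ℕ} (ht : t ∈ Icc 1 ℓ)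
    (u v p : V) :
    extendByOne x y t s(u, v) ≤ extendByOne x y t s(u, p) + extendByOne x y t s(p, v) := by
  have hb := extendByOne_mem_Icc hy ht
  obtain rfl | huv := eq_or_ne u v
  · rw [extendByOne_of_isDiag (Sym2.mk_isDiag_iff.2 rfl)]
    linarith [(hb s(u, p)).1, (hb s(p, u)).1]
  obtain rfl | hpu := eq_or_ne p u
  · simp [extendByOne_of_isDiag (Sym2.mk_isDiag_iff.2 rfl)]
  obtain rfl | hpv := eq_or_ne p v
  · simp [extendByOne_of_isDiag (Sym2.mk_isDiag_iff.2 rfl)]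
  have hup : ¬ (s(u, p) : Sym2 V).IsDiag := Sym2.mk_isDiag_iff.not.2 hpu.symm
  have hpv : ¬ (s(p, v) : Sym2 V).IsDiag := Sym2.mk_isDiag_iff.not.2 hpv
  by_cases hSup : s(u, p) ∈ SurvSV x t
  swap
  · rw [extendByOne_of_not_mem hup hSup]
    linarith [(hb s(u, v)).2, (hb s(p, v)).1]
  by_cases hSpv : s(p, v) ∈ SurvSV x t
  swap
  · rw [extendByOne_of_not_mem hpv hSpv]
    linarith [(hb s(u, v)).2, (hb s(u, p)).1]
  rw [extendByOne_of_mem hSup, extendByOne_of_mem hSpv]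
  by_cases hSuv : s(u, v) ∈ SurvSV x t
  · rw [extendByOne_of_mem hSuv]
    exact hy.1 t ht u v p hSup hSpv hSuv
  · rw [extendByOne_of_not_mem (Sym2.mk_isDiag_iff.not.2 huv) hSuv]
    exact hy.2.1 t ht u v p huv hSup hSpv hSuv

lemma lpStarFeasible_extendByOne (hx : LPStarFeasible ℓ x)
    (hy : LPStarStarFeasible ℓ (SurvSV x) y) : LPStarFeasible ℓ (extendByOne x y) := by
  refine ⟨fun t _ u => extendByOne_of_isDiag (Sym2.mk_isDiag_iff.2 rfl),
    fun t ht => extendByOne_triangle hy ht, fun t ht e => extendByOne_mem_Icc hy ht e, ?_⟩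
  intro t h1 h2 e
  by_cases hd : e.IsDiag
  · rw [extendByOne_of_isDiag hd, extendByOne_of_isDiag hd]
  by_cases hS : e ∈ SurvSV x t
  · -- `x` is non-increasing in `t`, so surviving pairs keep surviving
    have hS' : e ∈ SurvSV x (t + 1) := ⟨hd, (hx.2.2.2 t h1 h2 e).trans_lt hS.2⟩
    rw [extendByOne_of_mem hS, extendByOne_of_mem hS']
    exact hy.2.2.1 t h1 h2 e hS hS'
  · rw [extendByOne_of_not_mem hd hS]
    exact (extendByOne_mem_Icc hy (mem_Icc.2 ⟨by omega, h2⟩) e).2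

end

section

variable {α : Type*}

lemma sum_add_sum_one_sub_eq_of_eqOn (A N : Finset α) (S F : Set α) (z y : α → ℝ)
    (hA_out : ∀ e ∈ A, e ∉ S → z e = 1) (hA_in : ∀ e ∈ A, e ∈ S → z e = y e)
    (hN_out : ∀ e ∈ N, e ∉ F → z e = y e) (hN_in : ∀ e ∈ N, e ∈ F → z e = 1) :
    (∑ e ∈ A, z e) + ∑ e ∈ N, (1 - z e) =
      (#(A.filter (fun e => e ∉ S)) : ℝ) + (∑ e ∈ A.filter (fun e => e ∈ S), y e)
        + ∑ e ∈ N.filter (fun e => e ∉ F), (1 - y e) := by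
  rw [← sum_filter_add_sum_filter_not A (fun e => e ∈ S),
    ← sum_filter_add_sum_filter_not N (fun e => e ∉ F)]
  have hA_out' : ∑ e ∈ A.filter (fun e => e ∉ S), z e = #(A.filter (fun e => e ∉ S)) := by
    rw [sum_congr rfl fun e he => hA_out e (mem_filter.1 he).1 (mem_filter.1 he).2, sum_const,
      nsmul_one]
  have hA_in' : ∑ e ∈ A.filter (fun e => e ∈ S), z e = ∑ e ∈ A.filter (fun e => e ∈ S), y e :=
    sum_congr rfl fun e he => hA_in e (mem_filter.1 he).1 (mem_filter.1 he).2
  have hN_out' : ∑ e ∈ N.filter (fun e => e ∉ F), (1 - z e) =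
      ∑ e ∈ N.filter (fun e => e ∉ F), (1 - y e) :=
    sum_congr rfl fun e he => by rw [hN_out e (mem_filter.1 he).1 (mem_filter.1 he).2]
  have hN_in' : ∑ e ∈ N.filter (fun e => ¬ e ∉ F), (1 - z e) = 0 :=
    sum_eq_zero fun e he => by
      rw [hN_in e (mem_filter.1 he).1 (not_not.1 (mem_filter.1 he).2), sub_self]
  linarith

end

lemma lpStarVal_eq_lpStarStarVal {V : Type*} [Fintype V] [DecidableEq V] {ℓ : ℕ} {δ : ℕ → ℝ}
    {E : ℕ → Finset (Sym2 V)} {SVs Fbds : ℕ → Set (Sym2 V)} {z y : ℕ → Sym2 V → ℝ}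
    (hE_out : ∀ t ∈ Icc 1 ℓ, ∀ e ∈ E t, e ∉ SVs t → z t e = 1)
    (hE_in : ∀ t ∈ Icc 1 ℓ, ∀ e ∈ E t, e ∈ SVs t → z t e = y t e)
    (hNE_out : ∀ t ∈ Icc 1 ℓ, ∀ e : Sym2 V, ¬ e.IsDiag → e ∉ E t → e ∉ Fbds t → z t e = y t e)
    (hNE_in : ∀ t ∈ Icc 1 ℓ, ∀ e : Sym2 V, ¬ e.IsDiag → e ∉ E t → e ∈ Fbds t → z t e = 1) :
    LPStarVal ℓ δ E z = LPStarStarVal ℓ δ E SVs Fbds y := by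
  refine sum_congr rfl fun t ht => congrArg (δ t * ·) ?_
  have hNE : ∀ e ∈ univ.filter (fun e : Sym2 V => ¬ e.IsDiag) \ E t, ¬ e.IsDiag ∧ e ∉ E t :=
    fun e he => by simpa using he
  exact sum_add_sum_one_sub_eq_of_eqOn _ _ _ _ _ _ (hE_out t ht) (hE_in t ht)
    (fun e he => hNE_out t ht e (hNE e he).1 (hNE e he).2)
    (fun e he => hNE_in t ht e (hNE e he).1 (hNE e he).2)

section

variable {V : Type*} [Fintype V] [DecidableEq V] {ℓ : ℕ} {δ : ℕ → ℝ} {E : ℕ → Finset (Sym2 V)}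
  {x y : ℕ → Sym2 V → ℝ}

lemma lpStarVal_eq_lpStarStarVal_self (hE : ∀ t, ∀ e ∈ E t, ¬ e.IsDiag)
    (hx : LPStarFeasible ℓ x) :
    LPStarVal ℓ δ E x = LPStarStarVal ℓ δ E (SurvSV x) (forbiddenPairs E x) x := by
  refine lpStarVal_eq_lpStarStarVal ?_ (fun _ _ _ _ _ => rfl) (fun _ _ _ _ _ _ => rfl)
    fun _ _ _ _ _ he => he.2.2
  intro t ht e he hS
  refine le_antisymm (hx.2.2.1 t ht e).2 (not_lt.1 fun hlt => hS ⟨hE t e he, hlt⟩)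

lemma lpStarVal_extendByOne (hE : ∀ t, ∀ e ∈ E t, ¬ e.IsDiag) (hx : LPStarFeasible ℓ x) :
    LPStarVal ℓ δ E (extendByOne x y) =
      LPStarStarVal ℓ δ E (SurvSV x) (forbiddenPairs E x) y := by
  refine lpStarVal_eq_lpStarStarVal (fun t _ e he hS => extendByOne_of_not_mem (hE t e he) hS)
    (fun _ _ _ _ hS => extendByOne_of_mem hS) ?_ ?_
  · intro t ht e hd heE hF
    refine extendByOne_of_mem ⟨hd, (hx.2.2.1 t ht e).2.lt_of_ne fun h => hF ⟨hd, heE, h⟩⟩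
  · intro t _ e hd _ hF
    exact extendByOne_of_not_mem hd fun hS => hS.2.ne hF.2.2

end

theorem stmt12_general (V : Type*) [Fintype V] [DecidableEq V]
    (ℓ : ℕ)
    (δ : ℕ → ℝ)
    (E : ℕ → Finset (Sym2 V)) (hE : ∀ t, ∀ e ∈ E t, ¬ e.IsDiag)
    (x : ℕ → Sym2 V → ℝ)
    (hfeas : LPStarFeasible ℓ x)
    (hopt : ∀ y : ℕ → Sym2 V → ℝ, LPStarFeasible ℓ y →
      LPStarVal ℓ δ E x ≤ LPStarVal ℓ δ E y) :
    LPStarStarFeasible ℓ (SurvSV x) x ∧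
    ∀ y : ℕ → Sym2 V → ℝ, LPStarStarFeasible ℓ (SurvSV x) y →
      LPStarStarVal ℓ δ E (SurvSV x)
          (fun t => {e : Sym2 V | ¬ e.IsDiag ∧ e ∉ E t ∧ x t e = 1}) x
        ≤ LPStarStarVal ℓ δ E (SurvSV x)
            (fun t => {e : Sym2 V | ¬ e.IsDiag ∧ e ∉ E t ∧ x t e = 1}) y := by
  refine ⟨hfeas.lpStarStarFeasible_survSV, fun y hy => ?_⟩
  calc LPStarStarVal ℓ δ E (SurvSV x) (forbiddenPairs E x) x
      = LPStarVal ℓ δ E x := (lpStarVal_eq_lpStarStarVal_self hE hfeas).symm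
    _ ≤ LPStarVal ℓ δ E (extendByOne x y) := hopt _ (lpStarFeasible_extendByOne hfeas hy)
    _ = LPStarStarVal ℓ δ E (SurvSV x) (forbiddenPairs E x) y := lpStarVal_extendByOne hE hfeas

/-- Lemma 4.9: if `x̃` is an optimal solution of LP-(*), then its restriction to
the surviving pairs `SV^(t) = {{u,v} : x̃^(t){u,v} < 1}` is an optimal solution
of LP-(**) (with `Fbd^(t) = {{u,v} ∈ NE^(t) : x̃^(t){u,v} = 1}`): it is feasible
for LP-(**) and its LP-(**) objective value is minimal among all feasible
solutions of LP-(**). -/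
theorem stmt12 (V : Type*) [Fintype V] [DecidableEq V]
    (ℓ : ℕ) (hℓ : 1 ≤ ℓ)
    (δ : ℕ → ℝ) (hδ : ∀ t, 0 ≤ δ t)
    (E : ℕ → Finset (Sym2 V)) (hE : ∀ t, ∀ e ∈ E t, ¬ e.IsDiag)
    (x : ℕ → Sym2 V → ℝ)
    (hfeas : LPStarFeasible ℓ x)
    (hopt : ∀ y : ℕ → Sym2 V → ℝ, LPStarFeasible ℓ y →
      LPStarVal ℓ δ E x ≤ LPStarVal ℓ δ E y) :
    LPStarStarFeasible ℓ (SurvSV x) x ∧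
    ∀ y : ℕ → Sym2 V → ℝ, LPStarStarFeasible ℓ (SurvSV x) y →
      LPStarStarVal ℓ δ E (SurvSV x)
          (fun t => {e : Sym2 V | ¬ e.IsDiag ∧ e ∉ E t ∧ x t e = 1}) x
        ≤ LPStarStarVal ℓ δ E (SurvSV x)
            (fun t => {e : Sym2 V | ¬ e.IsDiag ∧ e ∉ E t ∧ x t e = 1}) y :=
  stmt12_general V ℓ δ E hE x hfeas hopt
end

section
/- Let 0 < α ≤ 1/2 and let a_1 ≥ a_2 ≥ … ≥ a_k ≥ 0 be reals with Σ_{j=2}^k a_j ≥ α·a_1. Then there exists a partition of {1,…,k} into two sets I and J such that α · Σ_{i∈I} a_i ≤ Σ_{j∈J} a_j ≤ Σ_{i∈I} a_i. -/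
/-!
Insert the items one at a time in non-increasing order of weight, each into the lighter of the two
groups. Whenever the newly inserted item makes its group the heavier one, it weighs at most as much
as any item already placed, hence at most the old heavier group, so the new heavier group weighs at
most twice the new lighter one. The only partitions this misses have a single item in the heavier
group; that item weighs at most `a 1`, and then `α · a 1 ≤ Σ_{j ≥ 2} a j` suffices.
-/

namespace Finset

variable {ι R : Type*} [DecidableEq ι] [CommRing R] [LinearOrder R] [IsStrictOrderedRing R]

theorem exists_partition_half_balanced_or_card_le_one (w : ι → R) (s : Finset ι)
    (hw : ∀ i ∈ s, 0 ≤ w i) :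
    ∃ I J : Finset ι, I ∪ J = s ∧ Disjoint I J ∧ ∑ j ∈ J, w j ≤ ∑ i ∈ I, w i ∧
      (∑ i ∈ I, w i ≤ 2 * ∑ j ∈ J, w j ∨ #I ≤ 1) := by
  induction s using Finset.induction_on_min_value (f := w) with
  | empty => exact ⟨∅, ∅, by simp⟩
  | insert a s ha hmin ih =>
    obtain ⟨I, J, hIJ, hdisj, hle, hbal⟩ := ih fun i hi ↦ hw i (mem_insert_of_mem hi)
    have haI : a ∉ I := fun h ↦ ha (hIJ ▸ mem_union_left J h)
    have haJ : a ∉ J := fun h ↦ ha (hIJ ▸ mem_union_right I h)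
    have hwa : 0 ≤ w a := hw a (mem_insert_self a s)
    by_cases hlight : ∑ j ∈ J, w j + w a ≤ ∑ i ∈ I, w i
    · refine ⟨I, insert a J, by rw [union_insert, hIJ], disjoint_insert_right.2 ⟨haI, hdisj⟩,
        ?_, ?_⟩
      · rwa [sum_insert haJ, add_comm]
      · rw [sum_insert haJ]
        rcases hbal with hbal | hcard
        · exact Or.inl (by linarith)
        · exact Or.inr hcard
    · replace hlight := (not_le.1 hlight).le
      refine ⟨insert a J, I, by rw [insert_union, union_comm, hIJ],
        disjoint_insert_left.2 ⟨haI, hdisj.symm⟩, ?_, ?_⟩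
      · rw [sum_insert haJ]; linarith
      rcases s.eq_empty_or_nonempty with rfl | ⟨x, hx⟩
      · right
        rw [union_eq_empty.1 hIJ |>.2]
        simp
      · left
        have hax : w a ≤ ∑ i ∈ I, w i := by
          have hxw : ∀ K ⊆ s, x ∈ K → w x ≤ ∑ i ∈ K, w i := fun K hK hxK ↦
            single_le_sum (fun i hi ↦ hw i (mem_insert_of_mem (hK hi))) hxK
          rcases mem_union.1 (hIJ ▸ hx) with hxI | hxJ
          · exact (hmin x hx).trans (hxw I (hIJ ▸ subset_union_left) hxI)
          · linarith [hmin x hx, hxw J (hIJ ▸ subset_union_right) hxJ]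
        rw [sum_insert haJ]
        linarith

end Finset

open Finset

/-- The grouping claim used in the balanced case of the forbidden-pairs bound:
given `0 < α ≤ 1/2` and reals `a 1 ≥ a 2 ≥ … ≥ a k ≥ 0` with
`Σ_{j=2}^k a j ≥ α · a 1`, the index set `{1, …, k}` can be partitioned into
two sets `I` and `J` with `α · Σ_{i∈I} a i ≤ Σ_{j∈J} a j ≤ Σ_{i∈I} a i`. -/
theorem stmt14 (α : ℝ) (hα0 : 0 < α) (hα1 : α ≤ 1 / 2)
    (k : ℕ) (hk : 1 ≤ k) (a : ℕ → ℝ)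
    (hmono : ∀ i j, 1 ≤ i → i ≤ j → j ≤ k → a j ≤ a i)
    (hnonneg : ∀ j ∈ Finset.Icc 1 k, 0 ≤ a j)
    (hsum : α * a 1 ≤ ∑ j ∈ Finset.Icc 2 k, a j) :
    ∃ I J : Finset ℕ, I ∪ J = Finset.Icc 1 k ∧ Disjoint I J ∧
      α * ∑ i ∈ I, a i ≤ ∑ j ∈ J, a j ∧ ∑ j ∈ J, a j ≤ ∑ i ∈ I, a i := by
  obtain ⟨I, J, hIJ, hdisj, hle, hbal⟩ :=
    exists_partition_half_balanced_or_card_le_one a (Icc 1 k) hnonneg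
  refine ⟨I, J, hIJ, hdisj, ?_, hle⟩
  have hI : 0 ≤ ∑ i ∈ I, a i :=
    sum_nonneg fun i hi ↦ hnonneg i (hIJ ▸ mem_union_left J hi)
  rcases hbal with hbal | hcard
  · calc α * ∑ i ∈ I, a i ≤ 1 / 2 * ∑ i ∈ I, a i := mul_le_mul_of_nonneg_right hα1 hI
      _ ≤ ∑ j ∈ J, a j := by linarith
  · have htotal : ∑ i ∈ I, a i + ∑ j ∈ J, a j = a 1 + ∑ j ∈ Icc 2 k, a j := by
      rw [← sum_union hdisj, hIJ, ← add_sum_Ioc_eq_sum_Icc hk]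
      rfl
    have hIa1 : ∑ i ∈ I, a i ≤ a 1 := by
      have hmax : ∀ i ∈ I, a i ≤ a 1 := fun i hi ↦ by
        have := mem_Icc.1 (hIJ ▸ mem_union_left J hi)
        exact hmono 1 i le_rfl this.1 this.2
      have ha1 : 0 ≤ a 1 := hnonneg 1 (mem_Icc.2 ⟨le_rfl, hk⟩)
      calc ∑ i ∈ I, a i ≤ #I • a 1 := sum_le_card_nsmul I a (a 1) hmax
        _ ≤ 1 • a 1 := nsmul_le_nsmul_left ha1 hcard
        _ = a 1 := one_nsmul _
    calc α * ∑ i ∈ I, a i ≤ α * a 1 := mul_le_mul_of_nonneg_left hIa1 hα0.le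
      _ ≤ ∑ j ∈ Icc 2 k, a j := hsum
      _ ≤ ∑ j ∈ J, a j := by linarith
end
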